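/- arXiv:2002.07297 — 4 statements merged into one kernel-verified Lean document; each statement's English description precedes it below -/
import Mathlib

section
/- Detection distance lower bound (Lemma A.1, general form): Let σ > 0, ζ* ∈ (0,1], γ* > 0, and let ν* = (1−ζ*)δ_0 + ζ*δ_{γ*}. Then for every probability measure ν on ℝ with ν((0,∞)) = 0, one has sup_t |F_ν(t) − F_{ν*}(t)| ≥ ζ* ( Φ_σ(γ*/2) − Φ_σ(−γ*/2) ). -/
open MeasureTheory ProbabilityTheory Set

/-- `Φ_σ`, the CDF of the Gaussian `N(0, σ²)`. -/
noncomputable def gaussCDF (σ t : ℝ) : ℝ :=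
  ∫ x in Set.Iic t, Real.exp (-(x ^ 2) / (2 * σ ^ 2)) / (σ * Real.sqrt (2 * Real.pi))

/-- CDF of the Gaussian location mixture with mixing distribution `ν` and noise level `σ`:
`F_ν(t) = ∫ Φ_σ(t − x) dν(x)`. -/
noncomputable def gmixCDF (σ : ℝ) (ν : Measure ℝ) (t : ℝ) : ℝ :=
  ∫ x, gaussCDF σ (t - x) ∂ν

/-- The two-spike mixing distribution `(1−ζ)δ_0 + ζδ_γ`. -/
noncomputable def twoSpike (ζ γ : ℝ) : Measure ℝ :=
  ENNReal.ofReal (1 - ζ) • Measure.dirac 0 + ENNReal.ofReal ζ • Measure.dirac γ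

noncomputable def gdens (σ x : ℝ) : ℝ :=
  Real.exp (-(x ^ 2) / (2 * σ ^ 2)) / (σ * Real.sqrt (2 * Real.pi))

lemma gdens_nonneg {σ : ℝ} (hσ : 0 < σ) (x : ℝ) : 0 ≤ gdens σ x := by
  have h := Real.pi_pos
  have := Real.exp_nonneg (-(x ^ 2) / (2 * σ ^ 2))
  unfold gdens
  positivity

lemma gdens_integrable {σ : ℝ} (hσ : 0 < σ) : Integrable (gdens σ) := by
  have h : Integrable (fun x => Real.exp (-(1 / (2 * σ ^ 2)) * x ^ 2)) :=
    integrable_exp_neg_mul_sq (by positivity)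
  have h2 : gdens σ = fun x =>
      Real.exp (-(1 / (2 * σ ^ 2)) * x ^ 2) / (σ * Real.sqrt (2 * Real.pi)) := by
    funext x
    unfold gdens
    congr 1
    ring_nf
  rw [h2]
  exact h.div_const _

lemma gaussCDF_eq (σ t : ℝ) : gaussCDF σ t = ∫ x in Set.Iic t, gdens σ x := rfl

lemma gaussCDF_nonneg {σ : ℝ} (hσ : 0 < σ) (t : ℝ) : 0 ≤ gaussCDF σ t := by
  rw [gaussCDF_eq]
  exact setIntegral_nonneg measurableSet_Iic fun x _ => gdens_nonneg hσ x

lemma gaussCDF_mono {σ : ℝ} (hσ : 0 < σ) : Monotone (gaussCDF σ) := by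
  intro s t hst
  rw [gaussCDF_eq, gaussCDF_eq]
  exact setIntegral_mono_set (gdens_integrable hσ).integrableOn
    (Filter.Eventually.of_forall fun x => gdens_nonneg hσ x)
    (HasSubset.Subset.eventuallyLE (Set.Iic_subset_Iic.2 hst))

lemma gaussCDF_le {σ : ℝ} (hσ : 0 < σ) (t : ℝ) : gaussCDF σ t ≤ ∫ x, gdens σ x := by
  rw [gaussCDF_eq]
  exact setIntegral_le_integral (gdens_integrable hσ)
    (Filter.Eventually.of_forall fun x => gdens_nonneg hσ x)

lemma gaussCDF_measurable {σ : ℝ} (hσ : 0 < σ) : Measurable (gaussCDF σ) :=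
  (gaussCDF_mono hσ).measurable

lemma integrable_shift {σ : ℝ} (hσ : 0 < σ) (t : ℝ) (μ : Measure ℝ) [IsFiniteMeasure μ] :
    Integrable (fun x => gaussCDF σ (t - x)) μ := by
  refine Integrable.mono' (integrable_const (∫ x, gdens σ x))
    ((gaussCDF_measurable hσ).comp (measurable_const.sub measurable_id)).aestronglyMeasurable
    (Filter.Eventually.of_forall fun x => ?_)
  rw [Real.norm_eq_abs, abs_of_nonneg (gaussCDF_nonneg hσ _)]
  exact gaussCDF_le hσ _

lemma integrable_dirac' {f : ℝ → ℝ} (hf : Measurable f) (a : ℝ) :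
    Integrable f (Measure.dirac a) := by
  refine ⟨hf.aestronglyMeasurable, ?_⟩
  rw [HasFiniteIntegral, lintegral_dirac' _ (by fun_prop)]
  exact ENNReal.coe_lt_top

lemma gmix_twoSpike {σ : ℝ} (hσ : 0 < σ) {ζ : ℝ} (hζ : ζ ∈ Set.Ioc (0 : ℝ) 1) (γ t : ℝ) :
    gmixCDF σ (twoSpike ζ γ) t = (1 - ζ) * gaussCDF σ t + ζ * gaussCDF σ (t - γ) := by
  have hmeas : Measurable (fun x => gaussCDF σ (t - x)) :=
    (gaussCDF_measurable hσ).comp (measurable_const.sub measurable_id)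
  unfold gmixCDF twoSpike
  rw [integral_add_measure, integral_smul_measure, integral_smul_measure,
    integral_dirac, integral_dirac]
  · rw [ENNReal.toReal_ofReal (by linarith [hζ.2]), ENNReal.toReal_ofReal hζ.1.le]
    simp [smul_eq_mul]
  · exact ((integrable_dirac' hmeas 0).smul_measure ENNReal.ofReal_ne_top)
  · exact ((integrable_dirac' hmeas γ).smul_measure ENNReal.ofReal_ne_top)

/-- Detection distance lower bound (Lemma A.1, general form). -/
theorem detection_distance_lower_bound
    (σ ζs γs : ℝ) (hσ : 0 < σ) (hζ : ζs ∈ Set.Ioc (0 : ℝ) 1) (hγ : 0 < γs)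
    (ν : Measure ℝ) [IsProbabilityMeasure ν] (hν : ν (Set.Ioi (0 : ℝ)) = 0) :
    (⨆ t : ℝ, |gmixCDF σ ν t - gmixCDF σ (twoSpike ζs γs) t|) ≥
      ζs * (gaussCDF σ (γs / 2) - gaussCDF σ (-(γs / 2))) := by
  set C : ℝ := ∫ x, gdens σ x with hC
  -- bounds on gmixCDF σ ν
  have hmix_nonneg : ∀ t, 0 ≤ gmixCDF σ ν t := fun t =>
    integral_nonneg fun x => gaussCDF_nonneg hσ _
  have hmix_le : ∀ t, gmixCDF σ ν t ≤ C := by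
    intro t
    calc gmixCDF σ ν t ≤ ∫ _ : ℝ, C ∂ν :=
          integral_mono (integrable_shift hσ t ν) (integrable_const C)
            fun x => gaussCDF_le hσ _
      _ = C := by simp
  -- bounds on gmixCDF for twoSpike
  have hts : ∀ t, gmixCDF σ (twoSpike ζs γs) t
      = (1 - ζs) * gaussCDF σ t + ζs * gaussCDF σ (t - γs) := fun t =>
    gmix_twoSpike hσ hζ γs t
  have hts_nonneg : ∀ t, 0 ≤ gmixCDF σ (twoSpike ζs γs) t := by
    intro t
    rw [hts t]
    have h1 := gaussCDF_nonneg hσ t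
    have h2 := gaussCDF_nonneg hσ (t - γs)
    nlinarith [hζ.1, hζ.2]
  have hts_le : ∀ t, gmixCDF σ (twoSpike ζs γs) t ≤ C := by
    intro t
    rw [hts t]
    have h1 := gaussCDF_le hσ t
    have h2 := gaussCDF_le hσ (t - γs)
    nlinarith [hζ.1, hζ.2]
  -- ν-a.e. x ≤ 0
  have hae : ∀ᵐ x ∂ν, x ≤ 0 := by
    rw [ae_iff]
    convert hν using 2
    ext x
    simp [Set.mem_Ioi, not_le]
  -- key lower bound at t₀ = γs / 2
  set t₀ : ℝ := γs / 2 with ht₀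
  have hlow : gaussCDF σ t₀ ≤ gmixCDF σ ν t₀ := by
    calc gaussCDF σ t₀ = ∫ _ : ℝ, gaussCDF σ t₀ ∂ν := by simp
      _ ≤ ∫ x, gaussCDF σ (t₀ - x) ∂ν := by
          refine integral_mono_ae (integrable_const _) (integrable_shift hσ t₀ ν) ?_
          filter_upwards [hae] with x hx
          exact gaussCDF_mono hσ (by linarith)
      _ = gmixCDF σ ν t₀ := rfl
  have hkey : ζs * (gaussCDF σ (γs / 2) - gaussCDF σ (-(γs / 2)))
      ≤ gmixCDF σ ν t₀ - gmixCDF σ (twoSpike ζs γs) t₀ := by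
    rw [hts t₀]
    have ht : t₀ - γs = -(γs / 2) := by rw [ht₀]; ring
    rw [ht]
    have : (1 - ζs) * gaussCDF σ t₀ + ζs * gaussCDF σ (-(γs / 2))
        = gaussCDF σ t₀ - ζs * (gaussCDF σ t₀ - gaussCDF σ (-(γs / 2))) := by ring
    rw [this, ht₀]
    linarith
  have habs : ζs * (gaussCDF σ (γs / 2) - gaussCDF σ (-(γs / 2)))
      ≤ |gmixCDF σ ν t₀ - gmixCDF σ (twoSpike ζs γs) t₀| :=
    hkey.trans (le_abs_self _)
  refine le_trans habs (le_ciSup (f := fun t => |gmixCDF σ ν t - gmixCDF σ (twoSpike ζs γs) t|) ?_ t₀)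
  refine ⟨C, ?_⟩
  rintro y ⟨t, rfl⟩
  rw [abs_le]
  constructor
  · have := hmix_nonneg t; have := hts_le t; linarith
  · have := hmix_le t; have := hts_nonneg t; linarith
end

section
/- Detection distance lower bound, small-effect regime (Lemma A.1, second form): Let σ > 0, ζ* ∈ (0,1], and 0 < γ* < σ, and let ν* = (1−ζ*)δ_0 + ζ*δ_{γ*}. Then for every probability measure ν on ℝ with ν((0,∞)) = 0, one has sup_t |F_ν(t) − F_{ν*}(t)| ≥ 23 ζ* γ* / (24 σ √(2π)). -/
open MeasureTheory ProbabilityTheory Set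

namespace DetectAux

noncomputable def gd (σ x : ℝ) : ℝ :=
  Real.exp (-(x ^ 2) / (2 * σ ^ 2)) / (σ * Real.sqrt (2 * Real.pi))

lemma gd_nonneg (σ x : ℝ) (hσ : 0 < σ) : 0 ≤ gd σ x := by
  unfold gd
  positivity

lemma gd_eq (σ x : ℝ) : gd σ x =
    Real.exp (-(1 / (2 * σ ^ 2)) * x ^ 2) * (σ * Real.sqrt (2 * Real.pi))⁻¹ := by
  unfold gd
  rw [div_eq_mul_inv]
  ring_nf

lemma gd_integrable (σ : ℝ) (hσ : 0 < σ) : MeasureTheory.Integrable (gd σ) := by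
  have h : (0 : ℝ) < 1 / (2 * σ ^ 2) := by positivity
  have := (integrable_exp_neg_mul_sq h).mul_const (σ * Real.sqrt (2 * Real.pi))⁻¹
  exact this.congr (Filter.Eventually.of_forall fun x => (gd_eq σ x).symm)

lemma gd_integral (σ : ℝ) (hσ : 0 < σ) : ∫ x, gd σ x = 1 := by
  have h : (0 : ℝ) < 1 / (2 * σ ^ 2) := by positivity
  have h1 : ∫ x, gd σ x =
      (∫ x, Real.exp (-(1 / (2 * σ ^ 2)) * x ^ 2)) * (σ * Real.sqrt (2 * Real.pi))⁻¹ := by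
    rw [← MeasureTheory.integral_mul_const]
    exact MeasureTheory.integral_congr_ae (Filter.Eventually.of_forall fun x => gd_eq σ x)
  rw [h1, integral_gaussian]
  have h2 : Real.pi / (1 / (2 * σ ^ 2)) = σ ^ 2 * (2 * Real.pi) := by
    field_simp
  rw [h2, Real.sqrt_mul (sq_nonneg σ), Real.sqrt_sq hσ.le]
  have hpos : 0 < σ * Real.sqrt (2 * Real.pi) := by
    have : (0 : ℝ) < 2 * Real.pi := by positivity
    positivity
  field_simp

lemma gaussCDF_eq (σ t : ℝ) : gaussCDF σ t = ∫ x in Set.Iic t, gd σ x := rfl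

lemma gaussCDF_mono (σ : ℝ) (hσ : 0 < σ) : Monotone (gaussCDF σ) := by
  intro s t hst
  rw [gaussCDF_eq, gaussCDF_eq]
  refine MeasureTheory.setIntegral_mono_set ((gd_integrable σ hσ).integrableOn) ?_ ?_
  · exact Filter.Eventually.of_forall fun x => gd_nonneg σ x hσ
  · exact Filter.Eventually.of_forall fun x hx => le_trans hx hst

lemma gaussCDF_nonneg (σ t : ℝ) (hσ : 0 < σ) : 0 ≤ gaussCDF σ t := by
  rw [gaussCDF_eq]
  exact MeasureTheory.setIntegral_nonneg measurableSet_Iic fun x _ => gd_nonneg σ x hσ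

lemma gaussCDF_le_one (σ t : ℝ) (hσ : 0 < σ) : gaussCDF σ t ≤ 1 := by
  rw [gaussCDF_eq, ← gd_integral σ hσ]
  exact MeasureTheory.setIntegral_le_integral (gd_integrable σ hσ)
    (Filter.Eventually.of_forall fun x => gd_nonneg σ x hσ)

lemma gaussCDF_sub (σ a b : ℝ) (hσ : 0 < σ) (hab : a ≤ b) :
    gaussCDF σ b - gaussCDF σ a = ∫ x in a..b, gd σ x := by
  rw [gaussCDF_eq, gaussCDF_eq]
  exact intervalIntegral.integral_Iic_sub_Iic
    ((gd_integrable σ hσ).integrableOn) ((gd_integrable σ hσ).integrableOn)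

lemma gaussCDF_gap (σ γ : ℝ) (hσ : 0 < σ) (hγ : 0 < γ) (hγσ : γ < σ) :
    gaussCDF σ (γ / 2) - gaussCDF σ (-(γ / 2)) ≥
      23 * γ / (24 * σ * Real.sqrt (2 * Real.pi)) := by
  have hab : -(γ / 2) ≤ γ / 2 := by linarith
  rw [gaussCDF_sub σ _ _ hσ hab]
  set D : ℝ := σ * Real.sqrt (2 * Real.pi) with hD
  have hDpos : 0 < D := by
    have : (0 : ℝ) < 2 * Real.pi := by positivity
    positivity
  have key : ∫ x in (-(γ / 2))..(γ / 2), (1 - x ^ 2 / (2 * σ ^ 2)) / D ≤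
      ∫ x in (-(γ / 2))..(γ / 2), gd σ x := by
    apply intervalIntegral.integral_mono_on hab
    · apply IntervalIntegrable.div_const
      apply IntervalIntegrable.sub intervalIntegrable_const
      apply IntervalIntegrable.div_const
      exact intervalIntegral.intervalIntegrable_pow 2
    · exact (gd_integrable σ hσ).intervalIntegrable
    · intro x _
      unfold gd
      rw [neg_div]
      apply div_le_div_of_nonneg_right _ hDpos.le
      have h := Real.add_one_le_exp (-(x ^ 2 / (2 * σ ^ 2)))
      linarith
  have hval : ∫ x in (-(γ / 2))..(γ / 2), (1 - x ^ 2 / (2 * σ ^ 2)) / D =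
      (γ - γ ^ 3 / (24 * σ ^ 2)) / D := by
    rw [intervalIntegral.integral_div]
    congr 1
    have h1 : ∫ x in (-(γ / 2))..(γ / 2), (1 - x ^ 2 / (2 * σ ^ 2)) =
        (∫ x in (-(γ / 2))..(γ / 2), (1 : ℝ)) -
        (∫ x in (-(γ / 2))..(γ / 2), x ^ 2) / (2 * σ ^ 2) := by
      rw [← intervalIntegral.integral_div]
      apply intervalIntegral.integral_sub intervalIntegrable_const
      exact (intervalIntegral.intervalIntegrable_pow 2).div_const _
    rw [h1, intervalIntegral.integral_const, integral_pow]
    rw [smul_eq_mul]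
    have hσ2 : (σ : ℝ) ^ 2 ≠ 0 := by positivity
    field_simp
    ring
  have hnum : 23 * γ / 24 ≤ γ - γ ^ 3 / (24 * σ ^ 2) := by
    have h1 : γ ^ 3 / (24 * σ ^ 2) ≤ γ / 24 := by
      rw [div_le_div_iff₀ (by positivity) (by norm_num)]
      nlinarith [mul_pos hγ hγ, mul_pos hσ hσ, mul_pos hγ hσ]
    linarith
  calc 23 * γ / (24 * σ * Real.sqrt (2 * Real.pi)) = (23 * γ / 24) / D := by
        rw [hD]; ring
    _ ≤ (γ - γ ^ 3 / (24 * σ ^ 2)) / D := by gcongr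
    _ = ∫ x in (-(γ / 2))..(γ / 2), (1 - x ^ 2 / (2 * σ ^ 2)) / D := hval.symm
    _ ≤ _ := key

lemma gaussCDF_meas (σ : ℝ) (hσ : 0 < σ) : Measurable (gaussCDF σ) :=
  (gaussCDF_mono σ hσ).measurable

lemma integrable_shift (σ t : ℝ) (hσ : 0 < σ) (μ : Measure ℝ) [IsFiniteMeasure μ] :
    MeasureTheory.Integrable (fun x => gaussCDF σ (t - x)) μ := by
  apply (MeasureTheory.integrable_const (1 : ℝ)).mono'
  · exact ((gaussCDF_meas σ hσ).comp (measurable_const.sub measurable_id)).aestronglyMeasurable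
  · filter_upwards with x
    rw [Real.norm_eq_abs, abs_of_nonneg (gaussCDF_nonneg _ _ hσ)]
    exact gaussCDF_le_one _ _ hσ

lemma gmix_twoSpike (σ ζ γ t : ℝ) (hσ : 0 < σ) (hζ0 : 0 ≤ ζ) (hζ1 : ζ ≤ 1) :
    gmixCDF σ (twoSpike ζ γ) t = (1 - ζ) * gaussCDF σ t + ζ * gaussCDF σ (t - γ) := by
  unfold gmixCDF twoSpike
  rw [MeasureTheory.integral_add_measure
      ((integrable_shift σ t hσ _).smul_measure ENNReal.ofReal_ne_top)
      ((integrable_shift σ t hσ _).smul_measure ENNReal.ofReal_ne_top),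
    MeasureTheory.integral_smul_measure, MeasureTheory.integral_smul_measure,
    MeasureTheory.integral_dirac, MeasureTheory.integral_dirac,
    ENNReal.toReal_ofReal (by linarith), ENNReal.toReal_ofReal hζ0]
  simp [smul_eq_mul]

lemma gmix_nonneg (σ t : ℝ) (hσ : 0 < σ) (μ : Measure ℝ) [IsFiniteMeasure μ] :
    0 ≤ gmixCDF σ μ t :=
  MeasureTheory.integral_nonneg fun x => gaussCDF_nonneg σ (t - x) hσ

lemma gmix_le_one (σ t : ℝ) (hσ : 0 < σ) (μ : Measure ℝ) [IsProbabilityMeasure μ] :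
    gmixCDF σ μ t ≤ 1 := by
  have : gmixCDF σ μ t ≤ ∫ _x, (1 : ℝ) ∂μ := by
    apply MeasureTheory.integral_mono (integrable_shift σ t hσ μ)
      (MeasureTheory.integrable_const 1)
    exact fun x => gaussCDF_le_one σ (t - x) hσ
  simpa using this

lemma gmix_ge (σ t : ℝ) (hσ : 0 < σ) (μ : Measure ℝ) [IsProbabilityMeasure μ]
    (hμ : μ (Set.Ioi (0 : ℝ)) = 0) : gaussCDF σ t ≤ gmixCDF σ μ t := by
  have hae : ∀ᵐ x ∂μ, x ≤ 0 := by
    rw [MeasureTheory.ae_iff]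
    simpa [Set.Ioi, not_le] using hμ
  have : ∫ _x, gaussCDF σ t ∂μ ≤ gmixCDF σ μ t := by
    apply MeasureTheory.integral_mono_ae (MeasureTheory.integrable_const _)
      (integrable_shift σ t hσ μ)
    filter_upwards [hae] with x hx
    exact gaussCDF_mono σ hσ (by linarith)
  simpa using this

end DetectAux

open DetectAux

/-- Detection distance lower bound, small-effect regime (Lemma A.1, second form). -/
theorem detection_distance_lower_bound_small_effect
    (σ ζs γs : ℝ) (hσ : 0 < σ) (hζ : ζs ∈ Set.Ioc (0 : ℝ) 1)
    (hγ : 0 < γs) (hγσ : γs < σ)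
    (ν : Measure ℝ) [IsProbabilityMeasure ν] (hν : ν (Set.Ioi (0 : ℝ)) = 0) :
    (⨆ t : ℝ, |gmixCDF σ ν t - gmixCDF σ (twoSpike ζs γs) t|) ≥
      23 * ζs * γs / (24 * σ * Real.sqrt (2 * Real.pi)) := by
  obtain ⟨hζ0, hζ1⟩ := hζ
  set t0 : ℝ := γs / 2 with ht0
  -- bound at t0
  have hkey : 23 * ζs * γs / (24 * σ * Real.sqrt (2 * Real.pi)) ≤
      gmixCDF σ ν t0 - gmixCDF σ (twoSpike ζs γs) t0 := by
    have hgap := gaussCDF_gap σ γs hσ hγ hγσ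
    have hts : gmixCDF σ (twoSpike ζs γs) t0 =
        (1 - ζs) * gaussCDF σ t0 + ζs * gaussCDF σ (t0 - γs) :=
      gmix_twoSpike σ ζs γs t0 hσ hζ0.le hζ1
    have hlow : gaussCDF σ t0 ≤ gmixCDF σ ν t0 := gmix_ge σ t0 hσ ν hν
    have ht0γ : t0 - γs = -(γs / 2) := by rw [ht0]; ring
    have hdiff : gmixCDF σ ν t0 - gmixCDF σ (twoSpike ζs γs) t0 ≥
        ζs * (gaussCDF σ (γs / 2) - gaussCDF σ (-(γs / 2))) := by
      rw [hts, ht0, ht0γ] at *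
      nlinarith [hlow]
    have : ζs * (23 * γs / (24 * σ * Real.sqrt (2 * Real.pi))) ≤
        ζs * (gaussCDF σ (γs / 2) - gaussCDF σ (-(γs / 2))) :=
      mul_le_mul_of_nonneg_left hgap hζ0.le
    have heq : 23 * ζs * γs / (24 * σ * Real.sqrt (2 * Real.pi)) =
        ζs * (23 * γs / (24 * σ * Real.sqrt (2 * Real.pi))) := by ring
    rw [heq]
    exact le_trans this hdiff
  -- boundedness of the family
  have hb : BddAbove (Set.range fun t => |gmixCDF σ ν t - gmixCDF σ (twoSpike ζs γs) t|) := by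
    refine ⟨2, ?_⟩
    rintro y ⟨t, rfl⟩
    have h1 : 0 ≤ gmixCDF σ ν t := gmix_nonneg σ t hσ ν
    have h2 : gmixCDF σ ν t ≤ 1 := gmix_le_one σ t hσ ν
    have hts : gmixCDF σ (twoSpike ζs γs) t =
        (1 - ζs) * gaussCDF σ t + ζs * gaussCDF σ (t - γs) :=
      gmix_twoSpike σ ζs γs t hσ hζ0.le hζ1
    have h3 : 0 ≤ gmixCDF σ (twoSpike ζs γs) t := by
      rw [hts]
      have := gaussCDF_nonneg σ t hσ
      have := gaussCDF_nonneg σ (t - γs) hσ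
      nlinarith
    have h4 : gmixCDF σ (twoSpike ζs γs) t ≤ 1 := by
      rw [hts]
      have := gaussCDF_le_one σ t hσ
      have := gaussCDF_le_one σ (t - γs) hσ
      have := gaussCDF_nonneg σ t hσ
      have := gaussCDF_nonneg σ (t - γs) hσ
      nlinarith
    rw [abs_le]
    constructor <;> linarith
  have := le_ciSup hb t0
  exact le_trans (le_trans hkey (le_abs_self _)) this
end

section
/- Gaussian CDF increment lower bound (step in the proof of Lemma A.1): Let σ > 0 and 0 < γ < σ. Then Φ_σ(γ/2) − Φ_σ(−γ/2) ≥ 23γ / (24 σ √(2π)), where Φ_σ is the CDF of N(0, σ²). -/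
open MeasureTheory Set

/-- Gaussian CDF increment lower bound (step in the proof of Lemma A.1):
for `0 < γ < σ`, `Φ_σ(γ/2) − Φ_σ(−γ/2) ≥ 23γ/(24σ√(2π))`. -/
theorem gauss_cdf_increment_lower_bound (σ γ : ℝ) (hσ : 0 < σ) (hγ : 0 < γ) (hγσ : γ < σ) :
    gaussCDF σ (γ / 2) - gaussCDF σ (-(γ / 2)) ≥ 23 * γ / (24 * σ * Real.sqrt (2 * Real.pi)) := by
  have hpi : 0 < Real.sqrt (2 * Real.pi) := Real.sqrt_pos.mpr (by positivity)
  set c := σ * Real.sqrt (2 * Real.pi) with hc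
  have hcpos : 0 < c := by positivity
  set f : ℝ → ℝ := fun x => Real.exp (-(x ^ 2) / (2 * σ ^ 2)) / c with hf
  have hint : Integrable f := by
    have h := (integrable_exp_neg_mul_sq (show (0:ℝ) < 1/(2*σ^2) by positivity)).div_const c
    refine h.congr (Filter.Eventually.of_forall fun x => ?_)
    simp only [hf]
    rw [show -(1/(2*σ^2)) * x ^ 2 = -(x ^ 2) / (2 * σ ^ 2) by ring]
  have key : gaussCDF σ (γ / 2) - gaussCDF σ (-(γ / 2))
      = ∫ x in (-(γ/2))..(γ/2), f x :=
    intervalIntegral.integral_Iic_sub_Iic hint.integrableOn hint.integrableOn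
  rw [key]
  have hab : -(γ/2) ≤ γ/2 := by linarith
  have hpoly : ∫ x in (-(γ/2))..(γ/2), (1 - x ^ 2 / (2 * σ ^ 2)) / c
      = (γ - γ^3/(24*σ^2)) / c := by
    rw [intervalIntegral.integral_div]
    rw [intervalIntegral.integral_sub (intervalIntegrable_const)
      (((continuous_pow 2).div_const _).intervalIntegrable _ _)]
    simp only [intervalIntegral.integral_div, integral_pow,
      intervalIntegral.integral_const, smul_eq_mul]
    field_simp
    ring
  have hmono : ∫ x in (-(γ/2))..(γ/2), (1 - x ^ 2 / (2 * σ ^ 2)) / c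
      ≤ ∫ x in (-(γ/2))..(γ/2), f x := by
    refine intervalIntegral.integral_mono_on hab
      (((continuous_const.sub ((continuous_pow 2).div_const _)).div_const _).intervalIntegrable _ _)
      hint.intervalIntegrable fun x _ => ?_
    have h1 : 1 + -(x ^ 2) / (2 * σ ^ 2) ≤ Real.exp (-(x ^ 2) / (2 * σ ^ 2)) := by
      have := Real.add_one_le_exp (-(x^2)/(2*σ^2)); linarith
    have h2 : -(x ^ 2) / (2 * σ ^ 2) = -(x ^ 2 / (2 * σ ^ 2)) := by ring
    simp only [hf]
    gcongr
    rw [h2] at h1 ⊢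
    linarith
  have hnum : 23 * γ / 24 ≤ γ - γ^3/(24*σ^2) := by
    have h1 : γ^3/(24*σ^2) ≤ γ/24 := by
      rw [div_le_div_iff₀ (by positivity) (by norm_num)]
      nlinarith [mul_nonneg (mul_nonneg hγ.le (sub_nonneg.mpr hγσ.le)) (by linarith : (0:ℝ) ≤ σ + γ)]
    linarith
  have hfinal : 23 * γ / (24 * c) ≤ (γ - γ^3/(24*σ^2)) / c := by
    rw [show 23 * γ / (24 * c) = (23 * γ / 24) / c by ring]
    gcongr
  calc 23 * γ / (24 * σ * Real.sqrt (2 * Real.pi)) = 23 * γ / (24 * c) := by rw [hc]; ring_nf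
    _ ≤ (γ - γ^3/(24*σ^2)) / c := hfinal
    _ = ∫ x in (-(γ/2))..(γ/2), (1 - x ^ 2 / (2 * σ ^ 2)) / c := hpoly.symm
    _ ≤ _ := hmono
end

section
/- Optimality of the two-spike minimizer (Lemma B.5): Let ζ* ∈ (0,1] and γ* ∈ (0,1], let ν* = (1−ζ*)δ_0 + ζ*δ_{γ*}, take noise level σ = 1, and let ν_OPT = (1 − ζ*/2)δ_0 + (ζ*/2)δ_{2γ*}. Then for every probability measure ν on ℝ with ν((0,∞)) ≤ (1/2)ζ*, one has sup_t |F_ν(t) − F_{ν*}(t)| ≥ sup_t |F_{ν_OPT}(t) − F_{ν*}(t)|; that is, ν_OPT attains the minimum of sup_t |F_ν(t) − F_{ν*}(t)| over { ν : ν((0,∞)) ≤ (1/2)ζ* }. -/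
open MeasureTheory ProbabilityTheory Set

namespace TwoSpikeAux

/-- standard normal pdf -/
noncomputable def gpdf (x : ℝ) : ℝ := Real.exp (-(x ^ 2) / 2) / Real.sqrt (2 * Real.pi)

lemma gaussCDF_one (t : ℝ) : gaussCDF 1 t = ∫ x in Set.Iic t, gpdf x := by
  simp [gaussCDF, gpdf]

lemma gpdf_nonneg (x : ℝ) : 0 ≤ gpdf x :=
  div_nonneg (Real.exp_pos _).le (Real.sqrt_nonneg _)

lemma gpdf_eq (x : ℝ) : gpdf x = Real.exp (-(1/2) * x ^ 2) * (Real.sqrt (2 * Real.pi))⁻¹ := by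
  rw [gpdf, div_eq_mul_inv]
  congr 2
  ring

lemma gpdf_integrable : Integrable gpdf := by
  have h := integrable_exp_neg_mul_sq (b := (1/2:ℝ)) (by norm_num)
  have h2 := h.mul_const (Real.sqrt (2 * Real.pi))⁻¹
  apply h2.congr
  filter_upwards with x
  rw [gpdf_eq]

lemma gpdf_integral : ∫ x, gpdf x = 1 := by
  have h : ∫ x : ℝ, Real.exp (-(1/2) * x ^ 2) = Real.sqrt (Real.pi / (1/2)) :=
    integral_gaussian (1/2)
  have h2 : (∫ x : ℝ, gpdf x) = (∫ x : ℝ, Real.exp (-(1/2) * x ^ 2)) * (Real.sqrt (2 * Real.pi))⁻¹ := by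
    rw [← integral_mul_const]
    congr 1
    ext x
    rw [gpdf_eq]
  rw [h2, h, show Real.pi / (1/2) = 2 * Real.pi by ring]
  have : Real.sqrt (2 * Real.pi) ≠ 0 := by
    positivity
  field_simp

/-- standard normal CDF -/
noncomputable def Phi (t : ℝ) : ℝ := ∫ x in Set.Iic t, gpdf x

lemma Phi_mono : Monotone Phi := by
  intro a b hab
  exact setIntegral_mono_set gpdf_integrable.integrableOn
    (Filter.Eventually.of_forall gpdf_nonneg)
    (HasSubset.Subset.eventuallyLE (Iic_subset_Iic.mpr hab))

lemma Phi_nonneg (t : ℝ) : 0 ≤ Phi t :=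
  setIntegral_nonneg measurableSet_Iic fun x _ => gpdf_nonneg x

lemma Phi_le_one (t : ℝ) : Phi t ≤ 1 := by
  rw [← gpdf_integral]
  exact setIntegral_le_integral gpdf_integrable (Filter.Eventually.of_forall gpdf_nonneg)

lemma Phi_neg (t : ℝ) : Phi (-t) = 1 - Phi t := by
  have h1 : Phi (-t) = ∫ x in Set.Ioi t, gpdf x := by
    rw [Phi, show (∫ x in Set.Iic (-t), gpdf x) = ∫ x in Set.Iic (-t), gpdf (-x) from
      setIntegral_congr_fun measurableSet_Iic (fun x _ => by rw [gpdf, gpdf]; norm_num)]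
    rw [integral_comp_neg_Iic]
    norm_num
  have h2 : Phi t + ∫ x in Set.Ioi t, gpdf x = 1 := by
    rw [Phi, intervalIntegral.integral_Iic_add_Ioi gpdf_integrable.integrableOn gpdf_integrable.integrableOn,
      gpdf_integral]
  linarith

lemma Phi_sub_Phi (a b : ℝ) : Phi b - Phi a = ∫ x in a..b, gpdf x :=
  intervalIntegral.integral_Iic_sub_Iic gpdf_integrable.integrableOn gpdf_integrable.integrableOn


lemma sqrt_two_pi_pos : 0 < Real.sqrt (2 * Real.pi) := by positivity

/-- pdf comparison -/
lemma gpdf_le_gpdf {x y : ℝ} (h : x ^ 2 ≤ y ^ 2) : gpdf y ≤ gpdf x := by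
  rw [gpdf, gpdf]
  exact (div_le_div_iff_of_pos_right sqrt_two_pi_pos).mpr (Real.exp_le_exp.mpr (by linarith))

lemma key_pw {γ t u : ℝ} (ht : t ≤ γ) (hu : t - 2*γ ≤ u) :
    gpdf (u + 2*(γ - t)) ≤ Real.exp (2*γ*(γ-t)) * gpdf u := by
  rw [gpdf, gpdf, ← mul_div_assoc, ← Real.exp_add]
  refine (div_le_div_iff_of_pos_right sqrt_two_pi_pos).mpr (Real.exp_le_exp.mpr ?_)
  nlinarith [mul_nonneg (sub_nonneg.mpr ht) (by linarith : (0:ℝ) ≤ u - (t - 2*γ))]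

lemma key_pw' {γ t u : ℝ} (ht : t ≤ γ) (hu : u ≤ t - 2*γ) :
    Real.exp (2*γ*(γ-t)) * gpdf u ≤ gpdf (u + 2*(γ - t)) := by
  rw [gpdf, gpdf, ← mul_div_assoc, ← Real.exp_add]
  refine (div_le_div_iff_of_pos_right sqrt_two_pi_pos).mpr (Real.exp_le_exp.mpr ?_)
  nlinarith [mul_nonneg (sub_nonneg.mpr ht) (by linarith : (0:ℝ) ≤ (t - 2*γ) - u)]

/-- the dual certificate function -/
noncomputable def ω (γ t x : ℝ) : ℝ :=
  Phi (2*γ - t - x) - Real.exp (2*γ*(γ-t)) * Phi (t - x)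

lemma shift_integral (a b c : ℝ) :
    (∫ x in (a+c)..(b+c), gpdf x) = ∫ x in a..b, gpdf (x + c) :=
  (intervalIntegral.integral_comp_add_right (fun x => gpdf x) c).symm

lemma omega_mono {γ t : ℝ} (ht : t ≤ γ) {x y : ℝ} (hxy : x ≤ y) (hy : y ≤ 2*γ) :
    ω γ t x ≤ ω γ t y := by
  have hii : IntervalIntegrable gpdf MeasureTheory.volume (t-y) (t-x) :=
    gpdf_integrable.intervalIntegrable
  have hii2 : IntervalIntegrable (fun u => gpdf (u + 2*(γ - t))) MeasureTheory.volume (t-y) (t-x) := by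
    rw [show t-y = (2*γ-t-y) - 2*(γ-t) by ring, show t-x = (2*γ-t-x) - 2*(γ-t) by ring]
    exact gpdf_integrable.intervalIntegrable.comp_add_right _
  have h1 : Phi (t-x) - Phi (t-y) = ∫ u in (t-y)..(t-x), gpdf u := Phi_sub_Phi _ _
  have h2 : Phi (2*γ-t-x) - Phi (2*γ-t-y) = ∫ u in (t-y)..(t-x), gpdf (u + 2*(γ-t)) := by
    rw [Phi_sub_Phi, show (2*γ-t-y : ℝ) = (t-y) + 2*(γ-t) by ring,
      show (2*γ-t-x : ℝ) = (t-x) + 2*(γ-t) by ring, shift_integral]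
  have h3 : (∫ u in (t-y)..(t-x), gpdf (u + 2*(γ-t)))
      ≤ ∫ u in (t-y)..(t-x), Real.exp (2*γ*(γ-t)) * gpdf u := by
    apply intervalIntegral.integral_mono_on (by linarith) hii2 (hii.const_mul _)
    intro u hu
    exact key_pw ht (by rcases hu with ⟨h, _⟩; linarith)
  rw [intervalIntegral.integral_const_mul] at h3
  have h4 : Real.exp (2*γ*(γ-t)) * (Phi (t-x) - Phi (t-y))
      = Real.exp (2*γ*(γ-t)) * ∫ u in (t-y)..(t-x), gpdf u := by rw [h1]
  rw [ω, ω]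
  linarith [h3, h2, h4]

lemma omega_le_apex {γ t : ℝ} (ht : t ≤ γ) (hγ : 0 ≤ γ) (x : ℝ) :
    ω γ t x ≤ ω γ t (2*γ) := by
  rcases le_or_gt x (2*γ) with hx | hx
  · exact omega_mono ht hx le_rfl
  · -- decreasing part
    have hii : IntervalIntegrable gpdf MeasureTheory.volume (t-x) (t-2*γ) :=
      gpdf_integrable.intervalIntegrable
    have hii2 : IntervalIntegrable (fun u => gpdf (u + 2*(γ - t))) MeasureTheory.volume (t-x) (t-2*γ) := by
      rw [show t-x = (2*γ-t-x) - 2*(γ-t) by ring, show t-2*γ = (2*γ-t-2*γ) - 2*(γ-t) by ring]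
      exact gpdf_integrable.intervalIntegrable.comp_add_right _
    have h1 : Phi (t-2*γ) - Phi (t-x) = ∫ u in (t-x)..(t-2*γ), gpdf u := Phi_sub_Phi _ _
    have h2 : Phi (2*γ-t-2*γ) - Phi (2*γ-t-x) = ∫ u in (t-x)..(t-2*γ), gpdf (u + 2*(γ-t)) := by
      rw [Phi_sub_Phi, show (2*γ-t-x : ℝ) = (t-x) + 2*(γ-t) by ring,
        show (2*γ-t-2*γ : ℝ) = (t-2*γ) + 2*(γ-t) by ring, shift_integral]
    have h3 : (∫ u in (t-x)..(t-2*γ), Real.exp (2*γ*(γ-t)) * gpdf u)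
        ≤ ∫ u in (t-x)..(t-2*γ), gpdf (u + 2*(γ-t)) := by
      apply intervalIntegral.integral_mono_on (by linarith) (hii.const_mul _) hii2
      intro u hu
      exact key_pw' ht (by rcases hu with ⟨_, h⟩; linarith)
    rw [intervalIntegral.integral_const_mul] at h3
    have h4 : Real.exp (2*γ*(γ-t)) * (Phi (t-2*γ) - Phi (t-x))
        = Real.exp (2*γ*(γ-t)) * ∫ u in (t-x)..(t-2*γ), gpdf u := by rw [h1]
    rw [ω, ω]
    linarith [h3, h2, h4]


lemma Phi_eq (t : ℝ) : gaussCDF 1 t = Phi t := gaussCDF_one t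

lemma intervalIntegrable_shift (a b c : ℝ) :
    IntervalIntegrable (fun x => gpdf (x + c)) MeasureTheory.volume a b := by
  have h := (gpdf_integrable.intervalIntegrable (μ := MeasureTheory.volume)
    (a := a + c) (b := b + c)).comp_add_right c
  simpa using h

lemma gpdf_even (x : ℝ) : gpdf (-x) = gpdf x := by rw [gpdf, gpdf]; norm_num

/-- the second difference `g t = Φ(t) − 2Φ(t−γ) + Φ(t−2γ)` is nonnegative for `t ≤ γ` -/
lemma g_nonneg {γ t : ℝ} (hγ : 0 ≤ γ) (ht : t ≤ γ) :
    0 ≤ Phi t - 2 * Phi (t - γ) + Phi (t - 2*γ) := by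
  have e1 : Phi t - Phi (t - γ) = ∫ x in (t-γ)..t, gpdf x := Phi_sub_Phi _ _
  have e2 : Phi (t-γ) - Phi (t - 2*γ) = ∫ x in (t-2*γ)..(t-γ), gpdf x := Phi_sub_Phi _ _
  have e3 : (∫ x in (t-2*γ)..(t-γ), gpdf x) = ∫ x in (γ-t)..(2*γ-t), gpdf x := by
    rw [show (∫ x in (γ-t)..(2*γ-t), gpdf x) = ∫ x in (γ-t)..(2*γ-t), gpdf (-x) from
      intervalIntegral.integral_congr (fun x _ => (gpdf_even x).symm),
      intervalIntegral.integral_comp_neg]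
    norm_num
  have e4 : (∫ x in (γ-t)..(2*γ-t), gpdf x) = ∫ x in (t-γ)..t, gpdf (x + 2*(γ-t)) := by
    rw [intervalIntegral.integral_comp_add_right (fun x => gpdf x) (2*(γ-t))]
    congr 1 <;> ring
  have hii : IntervalIntegrable gpdf MeasureTheory.volume (t-γ) t :=
    gpdf_integrable.intervalIntegrable
  have hii2 : IntervalIntegrable (fun x => gpdf (x + 2*(γ-t))) MeasureTheory.volume (t-γ) t :=
    intervalIntegrable_shift _ _ _
  have e5 : (∫ x in (t-γ)..t, gpdf (x + 2*(γ-t))) ≤ ∫ x in (t-γ)..t, gpdf x := by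
    apply intervalIntegral.integral_mono_on (by linarith) hii2 hii
    intro x hx
    apply gpdf_le_gpdf
    nlinarith [hx.1, sub_nonneg.mpr ht]
  linarith [e5, e1, e2, e3.trans e4]

/-- antisymmetry of the second difference about `γ` -/
lemma g_reflect (γ t : ℝ) :
    Phi (2*γ - t) - 2 * Phi (γ - t) + Phi (-t)
      = -(Phi t - 2 * Phi (t - γ) + Phi (t - 2*γ)) := by
  have s1 := Phi_neg (t - γ)
  have s2 := Phi_neg (t - 2*γ)
  have s3 := Phi_neg t
  rw [show γ - t = -(t - γ) by ring, show 2*γ - t = -(t - 2*γ) by ring]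
  linarith

lemma integrable_phi (ν : Measure ℝ) [IsFiniteMeasure ν] (t : ℝ) :
    Integrable (fun x => Phi (t - x)) ν := by
  have hm : Measurable fun x : ℝ => Phi (t - x) :=
    Phi_mono.measurable.comp (measurable_const.sub measurable_id)
  refine Integrable.mono' (integrable_const 1) hm.aestronglyMeasurable ?_
  filter_upwards with x
  rw [Real.norm_eq_abs, abs_le]
  exact ⟨by linarith [Phi_nonneg (t-x)], Phi_le_one _⟩

lemma integrable_phi' (ν : Measure ℝ) [IsFiniteMeasure ν] (t : ℝ) :
    Integrable (fun x => gaussCDF 1 (t - x)) ν := by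
  simp only [Phi_eq]
  exact integrable_phi ν t

/-- CDF of a two-spike mixture -/
lemma gmix_twoSpike {ζ : ℝ} (h0 : 0 ≤ ζ) (h1 : ζ ≤ 1) (γ t : ℝ) :
    gmixCDF 1 (twoSpike ζ γ) t = (1-ζ) * Phi t + ζ * Phi (t - γ) := by
  rw [gmixCDF, twoSpike]
  rw [integral_add_measure]
  · rw [integral_smul_measure, integral_smul_measure, integral_dirac, integral_dirac,
      ENNReal.toReal_ofReal (by linarith), ENNReal.toReal_ofReal h0]
    simp [Phi_eq]
  · exact (integrable_phi' (Measure.dirac 0) t).smul_measure ENNReal.ofReal_ne_top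
  · exact (integrable_phi' (Measure.dirac γ) t).smul_measure ENNReal.ofReal_ne_top


lemma main_bound (ζ γ : ℝ) (hζ0 : 0 < ζ) (hζ1 : ζ ≤ 1) (hγ : 0 < γ)
    (ν : Measure ℝ) [IsProbabilityMeasure ν]
    (hν : (ν (Set.Ioi (0:ℝ))).toReal ≤ 1/2 * ζ)
    (t : ℝ) (ht : t ≤ γ) (δ : ℝ)
    (hδ : ∀ s, |gmixCDF 1 ν s - gmixCDF 1 (twoSpike ζ γ) s| ≤ δ) :
    ζ/2 * (Phi t - 2 * Phi (t-γ) + Phi (t-2*γ)) ≤ δ := by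
  set lam := Real.exp (2*γ*(γ-t)) with hlamdef
  have hlam1 : 1 ≤ lam := Real.one_le_exp (by nlinarith)
  set m := (ν (Set.Ioi (0:ℝ))).toReal with hmdef
  have hω : Integrable (fun x => ω γ t x) ν := by
    simp only [ω]
    exact (integrable_phi ν (2*γ-t)).sub ((integrable_phi ν t).const_mul lam)
  have hFint : ∀ s, gmixCDF 1 ν s = ∫ x, Phi (s - x) ∂ν := by
    intro s; rw [gmixCDF]; simp only [Phi_eq]
  have hIeq : (∫ x, ω γ t x ∂ν) = gmixCDF 1 ν (2*γ-t) - lam * gmixCDF 1 ν t := by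
    rw [hFint, hFint, ← MeasureTheory.integral_const_mul,
      ← integral_sub (integrable_phi ν (2*γ-t)) ((integrable_phi ν t).const_mul lam)]
    simp only [ω, hlamdef]
  have hcompl : (Set.Iic (0:ℝ))ᶜ = Set.Ioi 0 := compl_Iic
  have hsplit : (∫ x, ω γ t x ∂ν)
      = (∫ x in Set.Iic 0, ω γ t x ∂ν) + ∫ x in Set.Ioi 0, ω γ t x ∂ν := by
    have h := integral_add_compl (measurableSet_Iic (a := (0:ℝ))) hω
    rw [hcompl] at h
    exact h.symm
  have hb1 : (∫ x in Set.Iic 0, ω γ t x ∂ν) ≤ (ν (Set.Iic 0)).toReal * ω γ t 0 := by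
    have h := setIntegral_mono_on (μ := ν) (s := Set.Iic 0)
      (f := fun x => ω γ t x) (g := fun _ => ω γ t 0)
      hω.integrableOn (integrable_const _).integrableOn measurableSet_Iic
      (fun x hx => omega_mono ht (mem_Iic.mp hx) (by linarith))
    rw [setIntegral_const, smul_eq_mul] at h
    exact h
  have hb2 : (∫ x in Set.Ioi 0, ω γ t x ∂ν) ≤ m * ω γ t (2*γ) := by
    have h := setIntegral_mono_on (μ := ν) (s := Set.Ioi 0)
      (f := fun x => ω γ t x) (g := fun _ => ω γ t (2*γ))
      hω.integrableOn (integrable_const _).integrableOn measurableSet_Ioi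
      (fun x _ => omega_le_apex ht hγ.le x)
    rw [setIntegral_const, smul_eq_mul] at h
    exact h
  have hmIic : (ν (Set.Iic 0)).toReal = 1 - m := by
    have h := measure_add_measure_compl (μ := ν) (measurableSet_Iic (a := (0:ℝ)))
    rw [hcompl, measure_univ] at h
    have h1 : (ν (Set.Iic 0)).toReal + m = 1 := by
      rw [hmdef, ← ENNReal.toReal_add (measure_ne_top ν _) (measure_ne_top ν _), h,
        ENNReal.toReal_one]
    linarith
  have hω0 : ω γ t 0 = Phi (2*γ-t) - lam * Phi t := by simp [ω, hlamdef]
  have hω2 : ω γ t (2*γ) = Phi (-t) - lam * Phi (t-2*γ) := by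
    rw [ω, show 2*γ-t-2*γ = -t by ring]
  have hωγ : ω γ t γ = Phi (γ-t) - lam * Phi (t-γ) := by
    rw [ω, show 2*γ-t-γ = γ-t by ring]
  have hgap : ω γ t 0 ≤ ω γ t (2*γ) := omega_mono ht (by linarith) le_rfl
  have hFs : ∀ s, gmixCDF 1 (twoSpike ζ γ) s = (1-ζ)*Phi s + ζ*Phi (s-γ) :=
    fun s => gmix_twoSpike hζ0.le hζ1 γ s
  have hd1 : gmixCDF 1 ν t - gmixCDF 1 (twoSpike ζ γ) t ≤ δ := (abs_le.mp (hδ t)).2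
  have hd2 : gmixCDF 1 (twoSpike ζ γ) (2*γ-t) - gmixCDF 1 ν (2*γ-t) ≤ δ := by
    linarith [(abs_le.mp (hδ (2*γ-t))).1]
  have s1 : Phi (γ-t) = 1 - Phi (t-γ) := by
    rw [show γ-t = -(t-γ) by ring]; exact Phi_neg _
  have s2 : Phi (2*γ-t) = 1 - Phi (t-2*γ) := by
    rw [show 2*γ-t = -(t-2*γ) by ring]; exact Phi_neg _
  have s3 : Phi (-t) = 1 - Phi t := Phi_neg t
  -- step 1 : integral bound
  have step1 : gmixCDF 1 ν (2*γ-t) - lam * gmixCDF 1 ν t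
      ≤ (1-m) * ω γ t 0 + m * ω γ t (2*γ) := by
    rw [← hIeq, hsplit]
    rw [hmIic] at hb1
    linarith [hb1, hb2]
  -- step 2 : worst-case mass
  have step2 : (1-m) * ω γ t 0 + m * ω γ t (2*γ)
      ≤ (1-ζ/2) * ω γ t 0 + (ζ/2) * ω γ t (2*γ) := by
    linarith [mul_nonneg (by linarith : (0:ℝ) ≤ ζ/2 - m)
      (by linarith [hgap] : (0:ℝ) ≤ ω γ t (2*γ) - ω γ t 0)]
  -- step 3 : δ bound
  have hd1' := mul_le_mul_of_nonneg_left hd1 (by linarith : (0:ℝ) ≤ lam)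
  have step3 : gmixCDF 1 (twoSpike ζ γ) (2*γ-t) - lam * gmixCDF 1 (twoSpike ζ γ) t
      - (1+lam)*δ ≤ gmixCDF 1 ν (2*γ-t) - lam * gmixCDF 1 ν t := by
    linarith [hd1', hd2]
  -- step 5 : two-spike values
  have step5 : gmixCDF 1 (twoSpike ζ γ) (2*γ-t) - lam * gmixCDF 1 (twoSpike ζ γ) t
      = (1-ζ) * ω γ t 0 + ζ * ω γ t γ := by
    rw [hFs, hFs, hω0, hωγ, show 2*γ-t-γ = γ-t by ring]
    ring
  -- step 6 : key identity
  have hid : (1+lam) * (Phi t - 2 * Phi (t-γ) + Phi (t-2*γ))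
      = 2*(ω γ t γ) - ω γ t 0 - ω γ t (2*γ) := by
    rw [hω0, hωγ, hω2, s1, s2, s3]; ring
  -- combine
  have key : ζ/2 * (2*(ω γ t γ) - ω γ t 0 - ω γ t (2*γ)) ≤ (1+lam) * δ := by
    linarith [step1, step2, step3, step5]
  have key2 : (1+lam) * (ζ/2 * (Phi t - 2 * Phi (t-γ) + Phi (t-2*γ))) ≤ (1+lam) * δ := by
    calc (1+lam) * (ζ/2 * (Phi t - 2 * Phi (t-γ) + Phi (t-2*γ)))
        = ζ/2 * ((1+lam) * (Phi t - 2 * Phi (t-γ) + Phi (t-2*γ))) := by ring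
      _ = ζ/2 * (2*(ω γ t γ) - ω γ t 0 - ω γ t (2*γ)) := by rw [hid]
      _ ≤ (1+lam) * δ := key
  exact le_of_mul_le_mul_left key2 (by linarith)


end TwoSpikeAux

open TwoSpikeAux

/-- Optimality of the two-spike minimizer (Lemma B.5): `ν_OPT = (1−ζ*/2)δ_0 + (ζ*/2)δ_{2γ*}`
minimizes `sup_t |F_ν(t) − F_{ν*}(t)|` over probability measures with `ν((0,∞)) ≤ ζ*/2`,
at unit noise level. -/
theorem two_spike_minimizer_optimal
    (ζs γs : ℝ) (hζ : ζs ∈ Set.Ioc (0 : ℝ) 1) (hγ : γs ∈ Set.Ioc (0 : ℝ) 1)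
    (ν : Measure ℝ) [IsProbabilityMeasure ν]
    (hν : (ν (Set.Ioi (0 : ℝ))).toReal ≤ 1 / 2 * ζs) :
    (⨆ t : ℝ, |gmixCDF 1 ν t - gmixCDF 1 (twoSpike ζs γs) t|) ≥
      ⨆ t : ℝ, |gmixCDF 1 (twoSpike (ζs / 2) (2 * γs)) t -
        gmixCDF 1 (twoSpike ζs γs) t| := by
  obtain ⟨hζ0, hζ1⟩ := hζ
  obtain ⟨hγ0, hγ1⟩ := hγ
  have hFν0 : ∀ s, 0 ≤ gmixCDF 1 ν s := fun s => by
    rw [gmixCDF]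
    exact integral_nonneg fun x => by rw [Phi_eq]; exact Phi_nonneg _
  have hFν1 : ∀ s, gmixCDF 1 ν s ≤ 1 := fun s => by
    rw [gmixCDF]
    calc (∫ x, gaussCDF 1 (s-x) ∂ν) ≤ ∫ _x, (1:ℝ) ∂ν :=
          integral_mono (integrable_phi' ν s) (integrable_const 1)
            (fun x => by rw [Phi_eq]; exact Phi_le_one _)
      _ = 1 := by simp
  have hFs : ∀ s, gmixCDF 1 (twoSpike ζs γs) s = (1-ζs)*Phi s + ζs*Phi (s-γs) :=
    fun s => gmix_twoSpike hζ0.le hζ1 γs s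
  have hFs0 : ∀ s, 0 ≤ gmixCDF 1 (twoSpike ζs γs) s := fun s => by
    rw [hFs s]
    nlinarith [Phi_nonneg s, Phi_nonneg (s-γs)]
  have hFs1 : ∀ s, gmixCDF 1 (twoSpike ζs γs) s ≤ 1 := fun s => by
    rw [hFs s]
    nlinarith [Phi_le_one s, Phi_le_one (s-γs), Phi_nonneg s, Phi_nonneg (s-γs)]
  have hbdd : BddAbove (Set.range fun s => |gmixCDF 1 ν s - gmixCDF 1 (twoSpike ζs γs) s|) := by
    refine ⟨2, ?_⟩
    rintro y ⟨s, rfl⟩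
    rw [abs_le]
    constructor
    · linarith [hFν0 s, hFs1 s]
    · linarith [hFν1 s, hFs0 s]
  have hδ : ∀ s, |gmixCDF 1 ν s - gmixCDF 1 (twoSpike ζs γs) s|
      ≤ ⨆ r : ℝ, |gmixCDF 1 ν r - gmixCDF 1 (twoSpike ζs γs) r| :=
    fun s => le_ciSup hbdd s
  rw [ge_iff_le]
  apply ciSup_le
  intro u
  have hopt : gmixCDF 1 (twoSpike (ζs/2) (2*γs)) u - gmixCDF 1 (twoSpike ζs γs) u
      = ζs/2 * (Phi u - 2*Phi (u-γs) + Phi (u-2*γs)) := by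
    rw [gmix_twoSpike (by linarith) (by linarith) (2*γs) u, hFs u]
    ring
  rw [show ζs / 2 = ζs/2 from rfl] at hopt
  rw [hopt]
  rcases le_or_gt u γs with hu | hu
  · rw [abs_of_nonneg (mul_nonneg (by linarith) (g_nonneg hγ0.le hu))]
    exact main_bound ζs γs hζ0 hζ1 hγ0 ν hν u hu _ hδ
  · have h := g_reflect γs (2*γs - u)
    rw [show 2*γs - (2*γs - u) = u by ring, show γs - (2*γs - u) = u - γs by ring,
      show -(2*γs - u) = u - 2*γs by ring] at h
    rw [h, mul_neg, abs_neg,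
      abs_of_nonneg (mul_nonneg (by linarith) (g_nonneg hγ0.le (by linarith)))]
    exact main_bound ζs γs hζ0 hζ1 hγ0 ν hν (2*γs - u) (by linarith) _ hδ
end
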